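/- Let (G,M,I) be a finite formal context and let Ĩ ⊆ I be a subset of maximum cardinality among all subsets of I that induce a bipartite subgraph of the incompatibility graph of (G,M,I). If the formal context (G,M,Ĩ) admits an ordinal two-factorization F̃1, F̃2, then this factorization is maximal for (G,M,I): for every pair of Ferrers relations F1, F2 ⊆ I, one has |F1 ∪ F2| ≤ |Ĩ| = |F̃1 ∪ F̃2|. -/

import Mathlib

set_option linter.unnecessarySimpa false

/-- A Ferrers relation: whenever `(g,m) ∈ F` and `(h,n) ∈ F`,
then `(g,n) ∈ F` or `(h,m) ∈ F`. -/
def IsFerrers {G M : Type*} (F : Set (G × M)) : Prop :=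
  ∀ g h : G, ∀ m n : M, (g, m) ∈ F → (h, n) ∈ F → (g, n) ∈ F ∨ (h, m) ∈ F

/-- Two pairs `p, q ∈ I` are incompatible if `(p.1, q.2) ∉ I` and `(q.1, p.2) ∉ I`. -/
def Incompatible {G M : Type*} (I : Set (G × M)) (p q : G × M) : Prop :=
  p ∈ I ∧ q ∈ I ∧ (p.1, q.2) ∉ I ∧ (q.1, p.2) ∉ I

/-- The subgraph of the incompatibility graph of the context `(G, M, I)` induced
by a vertex set `J ⊆ I`: vertices are the elements of `J`, with an edge between
each pair of elements incompatible with respect to `I`. -/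
def IncompSubgraph {G M : Type*} (I J : Set (G × M)) : SimpleGraph J where
  Adj p q := Incompatible I p.1 q.1
  symm := ⟨fun _ _ h => ⟨h.2.1, h.1, h.2.2.2, h.2.2.1⟩⟩
  loopless := ⟨fun p h => h.2.2.1 (by simpa using h.1)⟩

/-!
Every pair of Ferrers relations `F₁, F₂ ⊆ I` yields a bipartite induced subgraph on `F₁ ∪ F₂`:
colour an element by whether it lies in `F₁`. Two elements of one Ferrers relation inside `I`
are never incompatible, so the colouring is proper, and maximality of `Ĩ = F̃₁ ∪ F̃₂` among
vertex sets of bipartite induced subgraphs bounds `|F₁ ∪ F₂|`.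
-/

section

variable {G M : Type*} {I F F₁ F₂ : Set (G × M)}

theorem IsFerrers.not_incompatible (hF : IsFerrers F) (hFI : F ⊆ I) {p q : G × M}
    (hp : p ∈ F) (hq : q ∈ F) : ¬ Incompatible I p q := by
  rintro ⟨-, -, hpq, hqp⟩
  rcases hF p.1 q.1 p.2 q.2 hp hq with h | h
  · exact hpq (hFI h)
  · exact hqp (hFI h)

theorem IsFerrers.incompSubgraph_union_colorable_two (h₁ : IsFerrers F₁) (h₂ : IsFerrers F₂)
    (hF₁I : F₁ ⊆ I) (hF₂I : F₂ ⊆ I) : (IncompSubgraph I (F₁ ∪ F₂)).Colorable 2 := by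
  classical
  let coloring : (IncompSubgraph I (F₁ ∪ F₂)).Coloring Bool :=
    ⟨fun p => decide ((p : G × M) ∈ F₁), fun {p q} hpq hsame => by
      have hiff : (p : G × M) ∈ F₁ ↔ (q : G × M) ∈ F₁ := decide_eq_decide.mp hsame
      by_cases hp : (p : G × M) ∈ F₁
      · exact h₁.not_incompatible hF₁I hp (hiff.mp hp) hpq
      · exact h₂.not_incompatible hF₂I (p.2.resolve_left hp)
          (q.2.resolve_left (mt hiff.mpr hp)) hpq⟩
  simpa using coloring.colorable

end

theorem max_bipartite_subset_gives_maximal_factorization_general {G M : Type*}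
    (I Itil : Set (G × M))
    (hmax : ∀ J : Set (G × M), J ⊆ I → (IncompSubgraph I J).Colorable 2 →
      J.ncard ≤ Itil.ncard)
    (Ft1 Ft2 : Set (G × M))
    (hfact : Ft1 ∪ Ft2 = Itil) :
    ∀ F1 F2 : Set (G × M), IsFerrers F1 → IsFerrers F2 → F1 ⊆ I → F2 ⊆ I →
      (F1 ∪ F2).ncard ≤ Itil.ncard ∧ Itil.ncard = (Ft1 ∪ Ft2).ncard := by
  intro F1 F2 h1 h2 hF1I hF2I
  refine ⟨hmax _ (Set.union_subset hF1I hF2I) ?_, by rw [hfact]⟩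
  exact h1.incompSubgraph_union_colorable_two h2 hF1I hF2I

/-- Let `(G, M, I)` be a finite formal context and `Itil ⊆ I` of maximum cardinality
among the subsets of `I` inducing a bipartite subgraph of the incompatibility
graph of `(G, M, I)`.  If `(G, M, Itil)` admits an ordinal two-factorization
`Ft1, Ft2`, then this factorization is maximal: every pair of Ferrers relations
`F1, F2 ⊆ I` satisfies `|F1 ∪ F2| ≤ |Itil| = |Ft1 ∪ Ft2|`. -/
theorem max_bipartite_subset_gives_maximal_factorization {G M : Type*}
    [Finite G] [Finite M]
    (I Itil : Set (G × M)) (hsub : Itil ⊆ I)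
    (hbip : (IncompSubgraph I Itil).Colorable 2)
    (hmax : ∀ J : Set (G × M), J ⊆ I → (IncompSubgraph I J).Colorable 2 →
      J.ncard ≤ Itil.ncard)
    (Ft1 Ft2 : Set (G × M)) (hFt1 : IsFerrers Ft1) (hFt2 : IsFerrers Ft2)
    (hfact : Ft1 ∪ Ft2 = Itil) :
    ∀ F1 F2 : Set (G × M), IsFerrers F1 → IsFerrers F2 → F1 ⊆ I → F2 ⊆ I →
      (F1 ∪ F2).ncard ≤ Itil.ncard ∧ Itil.ncard = (Ft1 ∪ Ft2).ncard :=
  max_bipartite_subset_gives_maximal_factorization_general I Itil hmax Ft1 Ft2 hfact
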